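/- Let b_{1,2}(n) denote the total number of parts equal to 1, and b_{2,2}(n) the total number of parts equal to 2, in the partitions pre_2(λ) as λ ranges over all binary partitions of n, and set Δb_{2,2}(n) = b_{2,2}(n+1) - b_{2,2}(n). Then for every integer n ≥ 0, Δb_{2,2}(2n+1) = Δb_{2,2}(2n) = b_{1,2}(n+1). -/
import Mathlib

open Finset
open scoped Classical

/-- The finset of binary partitions of `n` (all parts are powers of `2`). -/
noncomputable def binaryPartitions (n : ℕ) : Finset (Nat.Partition n) :=
  Finset.univ.filter fun π => ∀ i ∈ π.parts, ∃ k : ℕ, i = 2 ^ k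

/-- `pre₂(λ)`: the multiset of pairwise products `λ_i * λ_j` (over pairs of distinct
indices `i < j`) of the parts of the partition `λ`. -/
def pre2 {n : ℕ} (π : Nat.Partition n) : Multiset ℕ :=
  (π.parts.powersetCard 2).map Multiset.prod

/-- `b_{i,2}(n)`: the total number of parts equal to `i` in the partitions `pre₂(λ)`
as `λ` ranges over the binary partitions of `n`. -/
noncomputable def bi2 (i n : ℕ) : ℕ :=
  ∑ π ∈ binaryPartitions n, (pre2 π).count i

lemma count_map_two_mul_one (s : Multiset ℕ) (hs : ∀ x ∈ s, 0 < x) :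
    (s.map (fun x => 2 * x)).count 1 = 0 := by
  rw [Multiset.count_eq_zero]
  intro h
  obtain ⟨x, hx, hx2⟩ := Multiset.mem_map.mp h
  have := hs x hx; omega

lemma count_map_two_mul_two (s : Multiset ℕ) :
    (s.map (fun x => 2 * x)).count 2 = s.count 1 := by
  induction s using Multiset.induction_on with
  | empty => simp
  | cons a s ih =>
    rw [Multiset.map_cons]
    rcases eq_or_ne a 1 with rfl | ha
    · rw [Multiset.count_cons_self, Multiset.count_cons_self, ih]
    · rw [Multiset.count_cons_of_ne (by omega),
        Multiset.count_cons_of_ne (fun h => ha h.symm), ih]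

lemma pre2count (s : Multiset ℕ) (h : ∀ x ∈ s, ∃ k : ℕ, x = 2 ^ k) :
    ((s.powersetCard 2).map Multiset.prod).count 1 = (s.count 1).choose 2 ∧
    ((s.powersetCard 2).map Multiset.prod).count 2 = s.count 1 * s.count 2 := by
  induction s using Multiset.induction_on with
  | empty => simp
  | cons a s ih =>
    have hs : ∀ x ∈ s, ∃ k : ℕ, x = 2 ^ k := fun x hx => h x (Multiset.mem_cons_of_mem hx)
    have hpos : ∀ x ∈ s, 0 < x := by
      intro x hx; obtain ⟨k, rfl⟩ := hs x hx; positivity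
    obtain ⟨ih1, ih2⟩ := ih hs
    have hmap : ((a ::ₘ s).powersetCard 2).map Multiset.prod
        = (s.powersetCard 2).map Multiset.prod + s.map (fun x => a * x) := by
      rw [show (2:ℕ) = 1 + 1 from rfl, Multiset.powersetCard_cons, Multiset.map_add,
        Multiset.map_map, Multiset.powersetCard_one, Multiset.map_map]
      congr 1
      apply Multiset.map_congr rfl
      intro x _; simp
    obtain ⟨k, rfl⟩ := h a (Multiset.mem_cons_self a s)
    rw [hmap]
    match k with
    | 0 =>
      have : s.map (fun x => 2^0 * x) = s := by
        simpa using Multiset.map_congr rfl (fun x _ => one_mul x)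
      rw [this]
      simp only [Multiset.count_add, ih1, ih2, pow_zero]
      constructor
      · rw [Multiset.count_cons_self, Nat.choose_succ_succ]
        simp [Nat.add_comm]
      · rw [Multiset.count_cons_self, Multiset.count_cons_of_ne (by norm_num)]
        ring
    | 1 =>
      simp only [Multiset.count_add, ih1, ih2, pow_one]
      constructor
      · rw [Multiset.count_cons_of_ne (by norm_num), count_map_two_mul_one s hpos]
        omega
      · rw [Multiset.count_cons_of_ne (by norm_num), Multiset.count_cons_self,
          count_map_two_mul_two]
        ring
    | (k+2) =>
      have hz : ∀ c, c ≤ 2 → c ≠ 0 → (s.map (fun x => 2^(k+2) * x)).count c = 0 := by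
        intro c hc hc0
        rw [Multiset.count_eq_zero]
        intro hmem
        obtain ⟨x, hx, hx2⟩ := Multiset.mem_map.mp hmem
        have h4 : 4 ≤ 2^(k+2) := by
          calc (4:ℕ) = 2^2 := rfl
          _ ≤ 2^(k+2) := Nat.pow_le_pow_right (by norm_num) (by omega)
        have := hpos x hx
        nlinarith [hx2]
      simp only [Multiset.count_add, ih1, ih2, hz 1 (by norm_num) (by norm_num),
        hz 2 (by norm_num) (by norm_num)]
      have h4 : 4 ≤ 2^(k+2) := by
        calc (4:ℕ) = 2^2 := rfl
        _ ≤ 2^(k+2) := Nat.pow_le_pow_right (by norm_num) (by omega)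
      rw [Multiset.count_cons_of_ne (by omega), Multiset.count_cons_of_ne (by omega)]
      simp

lemma mem_bp {n : ℕ} {π : Nat.Partition n} :
    π ∈ binaryPartitions n ↔ ∀ i ∈ π.parts, ∃ k : ℕ, i = 2 ^ k := by
  simp [binaryPartitions]

lemma bi2_one (n : ℕ) :
    bi2 1 n = ∑ π ∈ binaryPartitions n, (π.parts.count 1).choose 2 :=
  Finset.sum_congr rfl fun π hπ => (pre2count _ (mem_bp.mp hπ)).1

lemma bi2_two (n : ℕ) :
    bi2 2 n = ∑ π ∈ binaryPartitions n, π.parts.count 1 * π.parts.count 2 :=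
  Finset.sum_congr rfl fun π hπ => (pre2count _ (mem_bp.mp hπ)).2

noncomputable def Tb (n : ℕ) : ℕ := ∑ π ∈ binaryPartitions n, π.parts.count 2
noncomputable def Ub (n : ℕ) : ℕ := ∑ π ∈ binaryPartitions n, π.parts.count 1

lemma split_sum (m : ℕ) (f : Multiset ℕ → ℕ) :
    ∑ π ∈ binaryPartitions (m+1), f π.parts
      = (∑ μ ∈ binaryPartitions m, f (1 ::ₘ μ.parts))
        + ∑ π ∈ (binaryPartitions (m+1)).filter (fun π => 1 ∉ π.parts), f π.parts := by
  rw [← Finset.sum_filter_add_sum_filter_not (binaryPartitions (m+1)) (fun π => 1 ∈ π.parts)]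
  congr 1
  refine Finset.sum_bij'
    (i := fun π hπ => (⟨π.parts.erase 1,
      fun {i} hi => π.parts_pos (Multiset.mem_of_mem_erase hi), by
        have hmem : (1:ℕ) ∈ π.parts := (Finset.mem_filter.mp hπ).2
        have h2 := congrArg Multiset.sum (Multiset.cons_erase hmem)
        rw [Multiset.sum_cons, π.parts_sum] at h2; omega⟩ : Nat.Partition m))
    (j := fun μ _ => (⟨1 ::ₘ μ.parts,
      fun {i} hi => by
        rcases Multiset.mem_cons.mp hi with rfl | hh
        · norm_num
        · exact μ.parts_pos hh, by
        rw [Multiset.sum_cons, μ.parts_sum, Nat.add_comm]⟩ : Nat.Partition (m+1)))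
    ?_ ?_ ?_ ?_ ?_
  · intro π hπ
    rw [mem_bp]
    intro i hi
    exact (mem_bp.mp (Finset.mem_filter.mp hπ).1) i (Multiset.mem_of_mem_erase hi)
  · intro μ hμ
    rw [Finset.mem_filter]
    constructor
    · rw [mem_bp]
      intro i hi
      rcases Multiset.mem_cons.mp hi with rfl | hh
      · exact ⟨0, rfl⟩
      · exact (mem_bp.mp hμ) i hh
    · exact Multiset.mem_cons_self 1 _
  · intro π hπ
    apply Nat.Partition.ext
    exact Multiset.cons_erase (Finset.mem_filter.mp hπ).2
  · intro μ hμ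
    apply Nat.Partition.ext
    exact Multiset.erase_cons_head 1 _
  · intro π hπ
    have := Multiset.cons_erase (Finset.mem_filter.mp hπ).2
    simp only []
    rw [this]

lemma sum_map_two (t : Multiset ℕ) : (t.map (fun x => 2 * x)).sum = 2 * t.sum := by
  induction t using Multiset.induction_on with
  | empty => simp
  | cons a t ih => simp [ih]; ring

lemma odd_filter (m : ℕ) :
    (binaryPartitions (2*m+1)).filter (fun π => 1 ∉ π.parts) = ∅ := by
  rw [Finset.eq_empty_iff_forall_notMem]
  intro π hπ
  obtain ⟨hbp, h1⟩ := Finset.mem_filter.mp hπ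
  have hdvd : 2 ∣ π.parts.sum := by
    apply Multiset.dvd_sum
    intro x hx
    obtain ⟨k, rfl⟩ := (mem_bp.mp hbp) x hx
    match k with
    | 0 => exact absurd hx h1
    | (k+1) => exact Dvd.intro (2^k) (by ring)
  rw [π.parts_sum] at hdvd
  omega

lemma even_sum (m : ℕ) (f : Multiset ℕ → ℕ) :
    ∑ π ∈ (binaryPartitions (2*m+1+1)).filter (fun π => 1 ∉ π.parts), f π.parts
      = ∑ ν ∈ binaryPartitions (m+1), f (ν.parts.map (fun x => 2 * x)) := by
  have key : ∀ (π : Nat.Partition (2*m+2)), π ∈ (binaryPartitions (2*m+1+1)).filter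
      (fun π => 1 ∉ π.parts) → (π.parts.map (fun x => x / 2)).map (fun x => 2 * x) = π.parts := by
    intro π hπ
    obtain ⟨hbp, h1⟩ := Finset.mem_filter.mp hπ
    rw [Multiset.map_map]
    rw [show π.parts = π.parts.map id by simp]
    rw [Multiset.map_map]
    apply Multiset.map_congr rfl
    intro x hx
    obtain ⟨k, rfl⟩ := (mem_bp.mp hbp) x hx
    match k with
    | 0 => exact absurd hx h1
    | (k+1) => simp [pow_succ, Nat.mul_comm]
  refine Finset.sum_bij'
    (i := fun π hπ => (⟨π.parts.map (fun x => x / 2),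
      fun {i} hi => by
        obtain ⟨x, hx, rfl⟩ := Multiset.mem_map.mp hi
        obtain ⟨k, rfl⟩ := (mem_bp.mp (Finset.mem_filter.mp hπ).1) x hx
        match k with
        | 0 => exact absurd hx (Finset.mem_filter.mp hπ).2
        | (k+1) => simp [pow_succ], by
        have h2 := congrArg Multiset.sum (key π hπ)
        rw [sum_map_two, π.parts_sum] at h2
        omega⟩ : Nat.Partition (m+1)))
    (j := fun ν _ => (⟨ν.parts.map (fun x => 2 * x),
      fun {i} hi => by
        obtain ⟨x, hx, rfl⟩ := Multiset.mem_map.mp hi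
        have := ν.parts_pos hx; omega, by
        rw [sum_map_two, ν.parts_sum]; omega⟩ : Nat.Partition (2*m+1+1)))
    ?_ ?_ ?_ ?_ ?_
  · intro π hπ
    rw [mem_bp]
    intro i hi
    obtain ⟨x, hx, rfl⟩ := Multiset.mem_map.mp hi
    obtain ⟨k, rfl⟩ := (mem_bp.mp (Finset.mem_filter.mp hπ).1) x hx
    match k with
    | 0 => exact absurd hx (Finset.mem_filter.mp hπ).2
    | (k+1) => exact ⟨k, by simp [pow_succ, Nat.mul_comm]⟩
  · intro ν hν
    rw [Finset.mem_filter]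
    constructor
    · rw [mem_bp]
      intro i hi
      obtain ⟨x, hx, rfl⟩ := Multiset.mem_map.mp hi
      obtain ⟨k, rfl⟩ := (mem_bp.mp hν) x hx
      exact ⟨k+1, by ring⟩
    · intro hmem
      obtain ⟨x, hx, hx2⟩ := Multiset.mem_map.mp hmem
      have := ν.parts_pos hx; omega
  · intro π hπ
    apply Nat.Partition.ext
    exact key π hπ
  · intro ν hν
    apply Nat.Partition.ext
    simp only []
    rw [Multiset.map_map]
    rw [show ν.parts = ν.parts.map id by simp]
    rw [Multiset.map_map]
    apply Multiset.map_congr rfl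
    intro x _
    simp
  · intro π hπ
    simp only []
    rw [key π hπ]

lemma bi2_two_succ (m : ℕ) : bi2 2 (m+1) = bi2 2 m + Tb m := by
  rw [bi2_two, bi2_two, Tb,
    split_sum m (fun s => s.count 1 * s.count 2)]
  have h1 : ∑ π ∈ (binaryPartitions (m+1)).filter (fun π => 1 ∉ π.parts),
      ((Nat.Partition.parts π).count 1 * (Nat.Partition.parts π).count 2) = 0 := by
    apply Finset.sum_eq_zero
    intro π hπ
    rw [Multiset.count_eq_zero_of_notMem (Finset.mem_filter.mp hπ).2]
    ring
  rw [h1, Nat.add_zero, ← Finset.sum_add_distrib]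
  apply Finset.sum_congr rfl
  intro μ _
  rw [Multiset.count_cons_self, Multiset.count_cons_of_ne (by norm_num)]
  ring

lemma T_odd (n : ℕ) : Tb (2*n+1) = Tb (2*n) := by
  rw [Tb, Tb, split_sum (2*n) (fun s => s.count 2), odd_filter]
  simp only [Finset.sum_empty, Nat.add_zero]
  apply Finset.sum_congr rfl
  intro μ _
  rw [Multiset.count_cons_of_ne (by norm_num)]

lemma T_even (n : ℕ) : Tb (2*n+2) = Tb (2*n+1) + Ub (n+1) := by
  rw [show Tb (2*n+2) = Tb (2*n+1+1) from rfl, Tb, Tb, Ub,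
    split_sum (2*n+1) (fun s => s.count 2),
    even_sum n (fun s => s.count 2)]
  have e1 : ∑ μ ∈ binaryPartitions (2*n+1), (1 ::ₘ μ.parts).count 2
      = ∑ μ ∈ binaryPartitions (2*n+1), μ.parts.count 2 :=
    Finset.sum_congr rfl (fun μ _ => Multiset.count_cons_of_ne (by norm_num) _)
  have e2 : ∑ ν ∈ binaryPartitions (n+1), (ν.parts.map (fun x => 2 * x)).count 2
      = ∑ ν ∈ binaryPartitions (n+1), ν.parts.count 1 :=
    Finset.sum_congr rfl (fun ν _ => count_map_two_mul_two _)
  rw [e1, e2]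

lemma bi2_one_succ (m : ℕ) : bi2 1 (m+1) = bi2 1 m + Ub m := by
  rw [bi2_one, bi2_one, Ub, split_sum m (fun s => (s.count 1).choose 2)]
  have h1 : ∑ π ∈ (binaryPartitions (m+1)).filter (fun π => 1 ∉ π.parts),
      ((Nat.Partition.parts π).count 1).choose 2 = 0 := by
    apply Finset.sum_eq_zero
    intro π hπ
    rw [Multiset.count_eq_zero_of_notMem (Finset.mem_filter.mp hπ).2]
    rfl
  rw [h1, Nat.add_zero, ← Finset.sum_add_distrib]
  apply Finset.sum_congr rfl
  intro μ _
  rw [Multiset.count_cons_self, Nat.choose_succ_succ]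
  simp [Nat.add_comm]

lemma T_zero : Tb 0 = 0 := by
  rw [Tb]
  apply Finset.sum_eq_zero
  intro π _
  have : π.parts = 0 := by
    apply Multiset.eq_zero_of_forall_notMem
    intro x hx
    have h1 := π.parts_pos hx
    have h2 : x ≤ π.parts.sum := Multiset.single_le_sum (fun y _ => Nat.zero_le y) x hx
    rw [π.parts_sum] at h2
    omega
  rw [this]; rfl

lemma bi2_one_one : bi2 1 1 = 0 := by
  rw [bi2_one]
  apply Finset.sum_eq_zero
  intro π _
  have hcard : Multiset.card π.parts ≤ 1 := by
    have h := Multiset.card_nsmul_le_sum (s := π.parts) (a := 1)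
      (fun x hx => π.parts_pos hx)
    rw [π.parts_sum, smul_eq_mul, Nat.mul_one] at h
    exact h
  have : π.parts.count 1 ≤ 1 :=
    le_trans (Multiset.count_le_card 1 π.parts) hcard
  exact Nat.choose_eq_zero_of_lt (by omega)

lemma key_lemma (n : ℕ) : Tb (2*n) = bi2 1 (n+1) := by
  induction n with
  | zero => rw [Nat.mul_zero, T_zero, bi2_one_one]
  | succ n ih =>
    have h1 : Tb (2*(n+1)) = Tb (2*n+2) := by ring_nf
    rw [h1, T_even, T_odd, ih, bi2_one_succ (n+1)]

theorem delta_b22_eq_b12 (n : ℕ) :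
    (bi2 2 (2 * n + 2) : ℤ) - (bi2 2 (2 * n + 1) : ℤ) = (bi2 1 (n + 1) : ℤ) ∧
    (bi2 2 (2 * n + 1) : ℤ) - (bi2 2 (2 * n) : ℤ) = (bi2 1 (n + 1) : ℤ) := by
  have h1 : bi2 2 (2*n+2) = bi2 2 (2*n+1) + Tb (2*n+1) := bi2_two_succ (2*n+1)
  have h2 : bi2 2 (2*n+1) = bi2 2 (2*n) + Tb (2*n) := bi2_two_succ (2*n)
  have h3 := T_odd n
  have h4 := key_lemma n
  constructor <;> [rw [h1]; rw [h2]] <;> push_cast <;> omega
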